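/- For every H in the closed positive Weyl chamber, the product ∏_{α∈Σ⁺} ⟨α,H⟩ / sinh⟨α,H⟩ (with the convention x/sinh x = 1 at x = 0) is comparable, with constants depending only on Σ⁺, to ( ∏_{α∈Σ⁺} (1+⟨α,H⟩) ) · e^{−⟨ρ,H⟩}. -/

import Mathlib

/-!
Each factor is comparable to `(1 + x) e^{-x}` with constants `1/2` and `2`, because
`e^{-x} sinh x = (1 - e^{-2x}) / 2` and `1 - e^{-2x}` lies between `x / (1 + x)` and `min 1 (2x)`.
Multiplying these one-variable bounds over `Σ⁺` gives the constants `2^{-|Σ⁺|}` and `2^{|Σ⁺|}`,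
and `∏ e^{-⟨α,H⟩} = e^{-⟨ρ,H⟩}`.
-/

open scoped RealInnerProductSpace

open Real

lemma exp_neg_mul_sinh (x : ℝ) : exp (-x) * sinh x = (1 - exp (-(2 * x))) / 2 := by
  have h : exp (-x) * exp x = 1 := by rw [← exp_add, neg_add_cancel, exp_zero]
  have h2 : exp (-x) * exp (-x) = exp (-(2 * x)) := by rw [← exp_add]; ring_nf
  rw [sinh_eq]
  linear_combination h / 2 - h2 / 2

lemma one_add_mul_exp_neg_two_mul_le_one {x : ℝ} (hx : 0 ≤ x) :
    (1 + x) * exp (-(2 * x)) ≤ 1 :=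
  calc (1 + x) * exp (-(2 * x)) ≤ exp (2 * x) * exp (-(2 * x)) := by
        gcongr
        linarith [add_one_le_exp x, exp_le_exp.2 (by linarith : x ≤ 2 * x)]
    _ = 1 := by rw [← exp_add, add_neg_cancel, exp_zero]

lemma inv_two_mul_one_add_mul_exp_neg_le_div_sinh {x : ℝ} (hx : 0 ≤ x) :
    2⁻¹ * ((1 + x) * exp (-x)) ≤ if x = 0 then 1 else x / sinh x := by
  rw [inv_mul_eq_div]
  rcases hx.eq_or_lt with rfl | hx
  · norm_num
  rw [if_neg hx.ne', le_div_iff₀ (sinh_pos_iff.2 hx), mul_div_right_comm, mul_assoc,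
    exp_neg_mul_sinh]
  have h₁ : 1 - exp (-(2 * x)) ≤ 2 * x := by linarith [add_one_le_exp (-(2 * x))]
  have h₂ : 1 - exp (-(2 * x)) ≤ 1 := by linarith [exp_pos (-(2 * x))]
  rcases le_total x 1 with hx1 | hx1 <;> nlinarith

lemma div_sinh_le_two_mul_one_add_mul_exp_neg {x : ℝ} (hx : 0 ≤ x) :
    (if x = 0 then 1 else x / sinh x) ≤ 2 * ((1 + x) * exp (-x)) := by
  rcases hx.eq_or_lt with rfl | hx
  · norm_num
  rw [if_neg hx.ne', div_le_iff₀ (sinh_pos_iff.2 hx), mul_assoc, mul_assoc, exp_neg_mul_sinh]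
  nlinarith [one_add_mul_exp_neg_two_mul_le_one hx.le]

namespace Finset

variable {ι : Type*} {s : Finset ι} {f g : ι → ℝ} {c : ℝ}

lemma pow_card_mul_prod_le_prod (hc : 0 ≤ c) (hg : ∀ i ∈ s, 0 ≤ g i)
    (h : ∀ i ∈ s, c * g i ≤ f i) : c ^ s.card * ∏ i ∈ s, g i ≤ ∏ i ∈ s, f i := by
  rw [← prod_const, ← prod_mul_distrib]
  exact prod_le_prod (fun i hi => mul_nonneg hc (hg i hi)) h

lemma prod_le_pow_card_mul_prod (hf : ∀ i ∈ s, 0 ≤ f i) (h : ∀ i ∈ s, f i ≤ c * g i) :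
    ∏ i ∈ s, f i ≤ c ^ s.card * ∏ i ∈ s, g i := by
  rw [← prod_const, ← prod_mul_distrib]
  exact prod_le_prod hf h

end Finset

lemma prod_one_add_inner_mul_exp_neg_inner_sum {𝔞 : Type*} [NormedAddCommGroup 𝔞]
    [InnerProductSpace ℝ 𝔞] (S : Finset 𝔞) (H : 𝔞) :
    (∏ α ∈ S, (1 + ⟪α, H⟫)) * exp (-⟪∑ α ∈ S, α, H⟫)
      = ∏ α ∈ S, ((1 + ⟪α, H⟫) * exp (-⟪α, H⟫)) := by
  rw [Finset.prod_mul_distrib, sum_inner, ← Finset.sum_neg_distrib, exp_sum]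

theorem ground_spherical_comparable_general
    {𝔞 : Type*} [NormedAddCommGroup 𝔞] [InnerProductSpace ℝ 𝔞]
    (S : Finset 𝔞) :
    ∃ c₁ c₂ : ℝ, 0 < c₁ ∧ c₁ ≤ c₂ ∧
      ∀ H : 𝔞, (∀ α ∈ S, 0 ≤ ⟪α, H⟫) →
        c₁ * ((∏ α ∈ S, (1 + ⟪α, H⟫)) * Real.exp (-⟪∑ α ∈ S, α, H⟫))
          ≤ ∏ α ∈ S, (if ⟪α, H⟫ = 0 then 1 else ⟪α, H⟫ / Real.sinh ⟪α, H⟫) ∧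
        ∏ α ∈ S, (if ⟪α, H⟫ = 0 then 1 else ⟪α, H⟫ / Real.sinh ⟪α, H⟫)
          ≤ c₂ * ((∏ α ∈ S, (1 + ⟪α, H⟫)) * Real.exp (-⟪∑ α ∈ S, α, H⟫)) := by
  refine ⟨2⁻¹ ^ S.card, 2 ^ S.card, by positivity,
    pow_le_pow_left₀ (by norm_num) (by norm_num) _, fun H hH => ?_⟩
  rw [prod_one_add_inner_mul_exp_neg_inner_sum]
  have lower (α) (hα : α ∈ S) := inv_two_mul_one_add_mul_exp_neg_le_div_sinh (hH α hα)
  have weight_nonneg (α) (hα : α ∈ S) : 0 ≤ (1 + ⟪α, H⟫) * exp (-⟪α, H⟫) := by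
    have := hH α hα
    positivity
  refine ⟨Finset.pow_card_mul_prod_le_prod (by norm_num) weight_nonneg lower,
    Finset.prod_le_pow_card_mul_prod (fun α hα => ?_)
      (fun α hα => div_sinh_le_two_mul_one_add_mul_exp_neg (hH α hα))⟩
  exact (mul_nonneg (by norm_num) (weight_nonneg α hα)).trans (lower α hα)

/-- The ground spherical function estimate: `∏_{α∈Σ⁺} ⟨α,H⟩/sinh⟨α,H⟩` (with value 1 when
`⟨α,H⟩ = 0`) is comparable on the closed positive Weyl chamber to
`(∏_{α∈Σ⁺} (1+⟨α,H⟩)) e^{-⟨ρ,H⟩}`. -/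
theorem ground_spherical_comparable
    {𝔞 : Type*} [NormedAddCommGroup 𝔞] [InnerProductSpace ℝ 𝔞] [FiniteDimensional ℝ 𝔞]
    (S : Finset 𝔞) (hS : (0 : 𝔞) ∉ S) :
    ∃ c₁ c₂ : ℝ, 0 < c₁ ∧ c₁ ≤ c₂ ∧
      ∀ H : 𝔞, (∀ α ∈ S, 0 ≤ ⟪α, H⟫) →
        c₁ * ((∏ α ∈ S, (1 + ⟪α, H⟫)) * Real.exp (-⟪∑ α ∈ S, α, H⟫))
          ≤ ∏ α ∈ S, (if ⟪α, H⟫ = 0 then 1 else ⟪α, H⟫ / Real.sinh ⟪α, H⟫) ∧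
        ∏ α ∈ S, (if ⟪α, H⟫ = 0 then 1 else ⟪α, H⟫ / Real.sinh ⟪α, H⟫)
          ≤ c₂ * ((∏ α ∈ S, (1 + ⟪α, H⟫)) * Real.exp (-⟪∑ α ∈ S, α, H⟫)) :=
  ground_spherical_comparable_general S
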